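/- Let Y and Z be independent random variables with Y ~ Exp(λ_Y) and Z ~ Exp(λ_Z), where λ_Y, λ_Z > 0. Then for every δ > 0, μ > 0 and h > 0, one has P( δ · f(Y/δ, Z/μ) < h ) ≥ 1 − exp( −(λ_Y + (μ/δ)·λ_Z) · h ). -/

import Mathlib

open MeasureTheory ProbabilityTheory Filter Set

/-- The amplify-and-forward combining function `f(x,y) = x·y/(x+y+1)`. -/
noncomputable def f (x y : ℝ) : ℝ := x * y / (x + y + 1)

/-!
Since `f x y ≤ min x y` for `x, y ≥ 0` and both variables are a.s. nonnegative, the event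
`δ · f(Y/δ, Z/μ) ≥ h` forces `Y ≥ h` and `Z ≥ (μ/δ) h`. By independence this has probability
at most `exp(-λ_Y h) · exp(-λ_Z (μ/δ) h)`; pass to the complement.
-/

lemma f_comm (x y : ℝ) : f x y = f y x := by
  simp only [f, mul_comm x y, add_comm x y]

lemma f_le_left {x y : ℝ} (hx : 0 ≤ x) (hy : 0 ≤ y) : f x y ≤ x := by
  rw [f, div_le_iff₀ (by positivity)]
  nlinarith

lemma f_le_right {x y : ℝ} (hx : 0 ≤ x) (hy : 0 ≤ y) : f x y ≤ y :=
  f_comm x y ▸ f_le_left hy hx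

lemma le_and_le_of_le_mul_f {δ μ a b h : ℝ} (hδ : 0 < δ) (hμ : 0 < μ) (ha : 0 ≤ a)
    (hb : 0 ≤ b) (hf : h ≤ δ * f (a / δ) (b / μ)) : h ≤ a ∧ μ / δ * h ≤ b := by
  have ha' : 0 ≤ a / δ := by positivity
  have hb' : 0 ≤ b / μ := by positivity
  constructor
  · calc h ≤ δ * (a / δ) := hf.trans (by gcongr; exact f_le_left ha' hb')
      _ = a := by field_simp
  · rw [div_mul_eq_mul_div, div_le_iff₀ hδ]
    calc μ * h ≤ μ * (δ * (b / μ)) := by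
          gcongr
          exact hf.trans (by gcongr; exact f_le_right ha' hb')
      _ = b * δ := by field_simp

lemma ProbabilityTheory.hasLaw_of_map_eq {Ω α : Type*} [MeasurableSpace Ω] [MeasurableSpace α]
    {P : Measure Ω} {μ : Measure α} [NeZero μ] {X : Ω → α} (h : P.map X = μ) : HasLaw X μ P :=
  ⟨.of_map_ne_zero (h ▸ NeZero.ne μ), h⟩

lemma ae_nonneg_expMeasure {r : ℝ} (hr : 0 < r) : ∀ᵐ x ∂expMeasure r, 0 ≤ x := by
  have := isProbabilityMeasure_expMeasure hr
  rw [ae_iff]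
  refine measure_mono_null (t := Iic 0) (fun x hx ↦ (not_le.mp hx).le) ?_
  rw [← ofReal_cdf, cdf_expMeasure_eq hr]
  simp

lemma expMeasure_Ici_le {r : ℝ} (hr : 0 < r) (t : ℝ) :
    expMeasure r (Ici t) ≤ ENNReal.ofReal (Real.exp (-(r * t))) := by
  have := isProbabilityMeasure_expMeasure hr
  have hatom : expMeasure r {t} = 0 := withDensity_absolutelyContinuous _ _ (measure_singleton t)
  rw [← measure_congr (Ioi_ae_eq_Ici' hatom), ← compl_Iic,
    prob_compl_eq_one_sub measurableSet_Iic, ← ofReal_cdf, tsub_le_iff_right,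
    ← ENNReal.ofReal_add (Real.exp_pos _).le (cdf_nonneg _ _), ENNReal.one_le_ofReal,
    cdf_expMeasure_eq hr]
  split_ifs with ht
  · simp
  · simpa using Real.one_le_exp (x := -(r * t)) (by nlinarith)

lemma ProbabilityTheory.IndepFun.measure_Ici_inter_Ici_le_of_expMeasure {Ω : Type*}
    [MeasurableSpace Ω] {P : Measure Ω} {X Y : Ω → ℝ} {a b : ℝ} (ha : 0 < a) (hb : 0 < b)
    (hX : HasLaw X (expMeasure a) P) (hY : HasLaw Y (expMeasure b) P) (hXY : IndepFun X Y P)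
    (s t : ℝ) :
    P (X ⁻¹' Ici s ∩ Y ⁻¹' Ici t) ≤ ENNReal.ofReal (Real.exp (-(a * s) + -(b * t))) :=
  calc P (X ⁻¹' Ici s ∩ Y ⁻¹' Ici t) = expMeasure a (Ici s) * expMeasure b (Ici t) := by
        rw [hXY.measure_inter_preimage_eq_mul _ _ measurableSet_Ici measurableSet_Ici,
          ← hX.map_eq, ← hY.map_eq,
          Measure.map_apply_of_aemeasurable hX.aemeasurable measurableSet_Ici,
          Measure.map_apply_of_aemeasurable hY.aemeasurable measurableSet_Ici]
    _ ≤ ENNReal.ofReal (Real.exp (-(a * s))) * ENNReal.ofReal (Real.exp (-(b * t))) := by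
        gcongr
        exacts [expMeasure_Ici_le ha s, expMeasure_Ici_le hb t]
    _ = ENNReal.ofReal (Real.exp (-(a * s) + -(b * t))) := by
        rw [← ENNReal.ofReal_mul (Real.exp_pos _).le, ← Real.exp_add]

theorem relay_path_outage_lower_bound_general
    {Ω : Type*} [MeasurableSpace Ω] (P : Measure Ω) [IsProbabilityMeasure P]
    (lamY lamZ : ℝ) (hlamY : 0 < lamY) (hlamZ : 0 < lamZ)
    (Y Z : Ω → ℝ)
    (hYdist : Measure.map Y P = expMeasure lamY)
    (hZdist : Measure.map Z P = expMeasure lamZ)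
    (hindep : IndepFun Y Z P)
    (δ μ h : ℝ) (hδ : 0 < δ) (hμ : 0 < μ) :
    (P {ω | δ * f (Y ω / δ) (Z ω / μ) < h}).toReal
      ≥ 1 - Real.exp (-(lamY + (μ / δ) * lamZ) * h) := by
  have := isProbabilityMeasure_expMeasure hlamY
  have := isProbabilityMeasure_expMeasure hlamZ
  have hYlaw : HasLaw Y (expMeasure lamY) P := hasLaw_of_map_eq hYdist
  have hZlaw : HasLaw Z (expMeasure lamZ) P := hasLaw_of_map_eq hZdist
  set E := {ω | δ * f (Y ω / δ) (Z ω / μ) < h}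
  have hEc : Eᶜ ≤ᵐ[P] (Y ⁻¹' Ici h ∩ Z ⁻¹' Ici (μ / δ * h) : Set Ω) := by
    filter_upwards [(hYlaw.ae_iff (by fun_prop)).2 (ae_nonneg_expMeasure hlamY),
      (hZlaw.ae_iff (by fun_prop)).2 (ae_nonneg_expMeasure hlamZ)] with ω hYω hZω hω
    exact le_and_le_of_le_mul_f hδ hμ hYω hZω (not_lt.mp hω)
  have hEc_le : P Eᶜ ≤ ENNReal.ofReal (Real.exp (-(lamY + μ / δ * lamZ) * h)) := by
    rw [show -(lamY + μ / δ * lamZ) * h = -(lamY * h) + -(lamZ * (μ / δ * h)) by ring]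
    exact (measure_mono_ae hEc).trans
      (hindep.measure_Ici_inter_Ici_le_of_expMeasure hlamY hlamZ hYlaw hZlaw h (μ / δ * h))
  have hEc_real : P.real Eᶜ ≤ Real.exp (-(lamY + μ / δ * lamZ) * h) :=
    ENNReal.toReal_le_of_le_ofReal (Real.exp_pos _).le hEc_le
  have hunion : 1 ≤ P.real E + P.real Eᶜ := by
    simpa using measureReal_union_le (μ := P) E Eᶜ
  rw [ge_iff_le, ← measureReal_def]
  linarith

/-- **lower bound in the proof of Lemma 2 of the paper.**
For independent `Y ~ Exp(λ_Y)`, `Z ~ Exp(λ_Z)` and every `δ, μ, h > 0`,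
`P( δ·f(Y/δ, Z/μ) < h ) ≥ 1 − exp( −(λ_Y + (μ/δ)·λ_Z)·h )`. -/
theorem relay_path_outage_lower_bound
    {Ω : Type*} [MeasurableSpace Ω] (P : Measure Ω) [IsProbabilityMeasure P]
    (lamY lamZ : ℝ) (hlamY : 0 < lamY) (hlamZ : 0 < lamZ)
    (Y Z : Ω → ℝ) (hY : Measurable Y) (hZ : Measurable Z)
    (hYdist : Measure.map Y P = expMeasure lamY)
    (hZdist : Measure.map Z P = expMeasure lamZ)
    (hindep : IndepFun Y Z P)
    (δ μ h : ℝ) (hδ : 0 < δ) (hμ : 0 < μ) (hh : 0 < h) :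
    (P {ω | δ * f (Y ω / δ) (Z ω / μ) < h}).toReal
      ≥ 1 - Real.exp (-(lamY + (μ / δ) * lamZ) * h) :=
  relay_path_outage_lower_bound_general P lamY lamZ hlamY hlamZ Y Z hYdist hZdist hindep δ μ h hδ hμ
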